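/- Let (X, d) be a finite set with a distance function, n = |X| ≥ 3, m_1 = min_{x≠y} d(x,y)², and let S ⊆ X with |S| ≥ 2. For W ≥ 1 let w_W be the weight function with w_W(x) = W for x ∈ S and w_W(x) = 1 otherwise. If C is a k-clustering of X in which some cluster contains two distinct elements of S, then the k-means cost of C with respect to (w_W[X], d) is at least W²·m_1 / (|S|·W + n). -/

import Mathlib

open Finset

/-- A weight function assigns a positive real weight to every point. -/
def IsWeight {X : Type*} (w : X → ℝ) : Prop := ∀ x, 0 < w x

/-- A k-clustering: a partition of `X` into `k` pairwise disjoint nonempty parts. -/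
def IsClustering {X : Type*} [Fintype X] [DecidableEq X]
    (C : Finset (Finset X)) (k : ℕ) : Prop :=
  C.card = k ∧ (∀ A ∈ C, A.Nonempty) ∧
  (∀ A ∈ C, ∀ B ∈ C, A ≠ B → Disjoint A B) ∧
  (∀ x : X, ∃ A ∈ C, x ∈ A)

/-- `x ∼_C y`: `x` and `y` lie in the same cluster of `C`. -/
def SameCluster {X : Type*} [DecidableEq X] (C : Finset (Finset X)) (x y : X) : Prop :=
  ∃ A ∈ C, x ∈ A ∧ y ∈ A

/-- The k-means cost of a clustering `C` of weighted data `(w[X], d)`: for each cluster, the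
sum over unordered pairs of distinct points of `d(x,y)² w(x) w(y)` (written as half the sum
over ordered pairs of distinct points), divided by the cluster weight. -/
noncomputable def kmeansCost {X : Type*} [DecidableEq X]
    (C : Finset (Finset X)) (w : X → ℝ) (d : X → X → ℝ) : ℝ :=
  ∑ A ∈ C, ((1 / 2) * ∑ p ∈ A.offDiag, d p.1 p.2 ^ 2 * w p.1 * w p.2) / (∑ x ∈ A, w x)

/-- The min-sum cost of a clustering `C` of weighted data `(w[X], d)`: the sum over clusters
of the sum over unordered pairs of distinct points of `d(x,y) w(x) w(y)`. -/
noncomputable def minSumCost {X : Type*} [DecidableEq X]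
    (C : Finset (Finset X)) (w : X → ℝ) (d : X → X → ℝ) : ℝ :=
  ∑ A ∈ C, (1 / 2) * ∑ p ∈ A.offDiag, d p.1 p.2 * w p.1 * w p.2

/-! The cluster containing `x` and `y` alone costs at least `W² m₁` in the numerator (from the
ordered pairs `(x, y)` and `(y, x)`), and its weight is at most the total weight
`|S| W + |X \ S| ≤ |S| W + n`. -/

section

variable {X : Type*} [DecidableEq X]

lemma cluster_term_le_kmeansCost {C : Finset (Finset X)} {A : Finset X} (hA : A ∈ C)
    {w : X → ℝ} (hw : ∀ z, 0 ≤ w z) (d : X → X → ℝ) :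
    ((1 / 2) * ∑ p ∈ A.offDiag, d p.1 p.2 ^ 2 * w p.1 * w p.2) / (∑ z ∈ A, w z)
      ≤ kmeansCost C w d := by
  refine single_le_sum (f := fun A => ((1 / 2) * ∑ p ∈ A.offDiag, d p.1 p.2 ^ 2 * w p.1 * w p.2)
    / (∑ z ∈ A, w z)) (fun B _ => ?_) hA
  have hnum : 0 ≤ ∑ p ∈ B.offDiag, d p.1 p.2 ^ 2 * w p.1 * w p.2 :=
    sum_nonneg fun p _ => by have := hw p.1; have := hw p.2; positivity
  exact div_nonneg (mul_nonneg (by norm_num) hnum) (sum_nonneg fun z _ => hw z)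

lemma mul_mul_le_half_sum_offDiag {A : Finset X} {x y : X} (hx : x ∈ A) (hy : y ∈ A)
    (hxy : x ≠ y) {w : X → ℝ} (hw : ∀ z, 0 ≤ w z) {d : X → X → ℝ} {m : ℝ}
    (hm : ∀ p ∈ A.offDiag, m ≤ d p.1 p.2 ^ 2) :
    m * w x * w y ≤ (1 / 2) * ∑ p ∈ A.offDiag, d p.1 p.2 ^ 2 * w p.1 * w p.2 := by
  have hxy_mem : (x, y) ∈ A.offDiag := mem_offDiag.mpr ⟨hx, hy, hxy⟩
  have hyx_mem : (y, x) ∈ A.offDiag := mem_offDiag.mpr ⟨hy, hx, hxy.symm⟩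
  have hpair : ({(x, y), (y, x)} : Finset (X × X)) ⊆ A.offDiag :=
    insert_subset hxy_mem (singleton_subset_iff.mpr hyx_mem)
  have hsub := sum_le_sum_of_subset_of_nonneg hpair
    (f := fun p => d p.1 p.2 ^ 2 * w p.1 * w p.2)
    fun p _ _ => by have := hw p.1; have := hw p.2; positivity
  rw [sum_pair fun h => hxy (congrArg Prod.fst h)] at hsub
  have hwxy : 0 ≤ w x * w y := mul_nonneg (hw x) (hw y)
  nlinarith [mul_le_mul_of_nonneg_right (hm _ hxy_mem) hwxy,
    mul_le_mul_of_nonneg_right (hm _ hyx_mem) hwxy]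

lemma sum_ite_mem_le [Fintype X] (S A : Finset X) {W : ℝ} (hW : 0 ≤ W) :
    ∑ z ∈ A, (if z ∈ S then W else 1) ≤ S.card * W + Fintype.card X := by
  calc ∑ z ∈ A, (if z ∈ S then W else 1)
      ≤ ∑ z, (if z ∈ S then W else 1) :=
        sum_le_sum_of_subset_of_nonneg (subset_univ A) fun z _ _ => by split_ifs <;> positivity
    _ = S.card * W + Sᶜ.card := by
        rw [sum_ite, sum_const, sum_const, nsmul_eq_mul, nsmul_eq_mul, mul_one]
        simp only [filter_mem_eq_inter, univ_inter, filter_not, ← compl_eq_univ_sdiff]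
    _ ≤ S.card * W + Fintype.card X := by gcongr; exact card_le_univ Sᶜ

end

theorem kmeansCost_lower_bound_of_not_separated
    {X : Type*} [Fintype X] [DecidableEq X]
    (d : X → X → ℝ)
    (hn : 3 ≤ Fintype.card X)
    (S : Finset X)
    (C : Finset (Finset X))
    (Ci : Finset X) (hCi : Ci ∈ C) (x y : X) (hx : x ∈ Ci) (hy : y ∈ Ci)
    (hxS : x ∈ S) (hyS : y ∈ S) (hxy : x ≠ y)
    (W : ℝ) (hW : 1 ≤ W) :
    W ^ 2 *
        ((Finset.univ : Finset X).offDiag.inf'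
          (by
            obtain ⟨a, b, hab⟩ := Fintype.exists_pair_of_one_lt_card (by omega : 1 < Fintype.card X)
            exact ⟨(a, b), Finset.mem_offDiag.mpr ⟨Finset.mem_univ a, Finset.mem_univ b, hab⟩⟩)
          (fun p => d p.1 p.2 ^ 2)) /
        ((S.card : ℝ) * W + (Fintype.card X : ℝ))
      ≤ kmeansCost C (fun z => if z ∈ S then W else 1) d := by
  set w : X → ℝ := fun z => if z ∈ S then W else 1
  set m := (univ : Finset X).offDiag.inf' _ (fun p => d p.1 p.2 ^ 2)
  have hw : ∀ z, 0 ≤ w z := fun z => by dsimp only [w]; split_ifs <;> linarith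
  have hm : ∀ p ∈ Ci.offDiag, m ≤ d p.1 p.2 ^ 2 := fun p hp =>
    inf'_le _ (mem_offDiag.mpr ⟨mem_univ _, mem_univ _, (mem_offDiag.mp hp).2.2⟩)
  have hm_nonneg : 0 ≤ m := le_inf' _ _ fun p _ => sq_nonneg _
  have hnum : W ^ 2 * m ≤ (1 / 2) * ∑ p ∈ Ci.offDiag, d p.1 p.2 ^ 2 * w p.1 * w p.2 := by
    have := mul_mul_le_half_sum_offDiag hx hy hxy hw hm
    simp only [w, if_pos hxS, if_pos hyS] at this
    linarith
  have hden_pos : 0 < ∑ z ∈ Ci, w z :=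
    sum_pos' (fun z _ => hw z) ⟨x, hx, by simp only [w, if_pos hxS]; linarith⟩
  calc W ^ 2 * m / (S.card * W + Fintype.card X)
      ≤ ((1 / 2) * ∑ p ∈ Ci.offDiag, d p.1 p.2 ^ 2 * w p.1 * w p.2) / (∑ z ∈ Ci, w z) :=
        div_le_div₀ (by positivity) hnum hden_pos (sum_ite_mem_le S Ci (by linarith))
    _ ≤ kmeansCost C w d := cluster_term_le_kmeansCost hCi hw d
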